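/- Let β > 1 and for n ≥ 1 define t_n(β) = max{k ≥ 1 : ε*_{n+1}(β) = ⋯ = ε*_{n+k}(β) = 0} (with t_n = 0 if no such k), and Γ_n(β) = max_{1 ≤ k ≤ n} t_k(β). Then Γ_n(β) is finite for every n ≥ 1, and for every admissible word (ω_1,…,ω_n), the word (ω_1,…,ω_n,0^{Γ_n(β)+1}) is full. -/

import Mathlib

/-!
Write `T` for the β-transformation and `s_j(d) = ∑_{i<j} d_i β^{-(i+1)}`. By the greedy
algorithm, `x` has first digits `d_0, …, d_{N-1}` iff `s_j(d) ≤ x < s_j(d) + β^{-j}` for all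
`j ≤ N`. For the word `ω 0^{Γ+1}` these intervals all contain `[s_n, s_n + β^{-(n+Γ+1)})`, which
is therefore the cylinder. This nesting reduces, applied to the tails `T^j x₀` of a point
`x₀` realising `ω`, to `s_m(x) + β^{-(m+Γ+1)} ≤ 1` for `x ∈ [0, 1)` and `m ≤ n`. To prove it,
compare the digits of `x` with those of `1`: at the first difference the digit of `x` is smaller
and induction handles the tail; if there is none, `1 - s_m = β^{-m} T^m 1`, and a nonzero
`T^m 1` is at least `β^{-(t_m+1)} ≥ β^{-(Γ+1)}`, since the first nonzero digit of `1` after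
position `m` comes within `t_m + 1` steps (there `ε*` still agrees with the expansion of `1`).
-/

open Filter MeasureTheory Set

noncomputable def betaT (β : ℝ) (x : ℝ) : ℝ := β * x - ⌊β * x⌋

noncomputable def eps (β x : ℝ) (n : ℕ) : ℤ := ⌊β * (betaT β)^[n - 1] x⌋

noncomputable def runLen (β x : ℝ) (n : ℕ) : ℕ :=
  sSup {j | ∃ i, i + j ≤ n ∧ ∀ k < j, eps β x (i + k + 1) = 0}

def isAdmissible (β : ℝ) (n : ℕ) (ω : ℕ → ℤ) : Prop :=
  ∃ x ∈ Set.Ico (0 : ℝ) 1, ∀ k < n, eps β x (k + 1) = ω k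

def cylinder (β : ℝ) (n : ℕ) (ω : ℕ → ℤ) : Set ℝ :=
  {x | x ∈ Set.Ico (0 : ℝ) 1 ∧ ∀ k < n, eps β x (k + 1) = ω k}

def isFull (β : ℝ) (n : ℕ) (ω : ℕ → ℤ) : Prop :=
  MeasureTheory.volume (cylinder β n ω) = ENNReal.ofReal (β ^ (-(n : ℤ)))

open Classical in
noncomputable def epsStar (β : ℝ) : ℕ → ℤ :=
  if h : ∃ m, 1 ≤ m ∧ eps β 1 m ≠ 0 ∧ ∀ k, m < k → eps β 1 k = 0 then
    fun n =>
      if (n - 1) % Nat.find h + 1 = Nat.find h then eps β 1 (Nat.find h) - 1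
      else eps β 1 ((n - 1) % Nat.find h + 1)
  else eps β 1

def lexLt (u v : ℕ → ℤ) : Prop := ∃ j, (∀ k < j, u k = v k) ∧ u j < v j

def lexLe (u v : ℕ → ℤ) : Prop := lexLt u v ∨ u = v

noncomputable def vbeta (β x : ℝ) : ℝ :=
  sSup {v | 0 ≤ v ∧ ∃ᶠ n : ℕ in atTop, (betaT β)^[n] x ≤ β ^ (-((n : ℝ) * v))}

noncomputable def hatv (β x : ℝ) : ℝ :=
  sSup {v | 0 ≤ v ∧ ∀ᶠ N : ℕ in atTop, ∃ n, 1 ≤ n ∧ n ≤ N ∧ (betaT β)^[n] x ≤ β ^ (-(v * (N : ℝ)))}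

/-- `digits β x k` is the digit `ε_{k+1}(x)`: indices start at `0`, as in `isAdmissible`. -/
noncomputable def digits (β x : ℝ) (k : ℕ) : ℤ := eps β x (k + 1)

noncomputable def digitSum (β : ℝ) (d : ℕ → ℤ) (m : ℕ) : ℝ :=
  ∑ i ∈ Finset.range m, (d i : ℝ) * β⁻¹ ^ (i + 1)

section BetaTransformation

variable {β x : ℝ}

lemma digits_eq_floor (β x : ℝ) (k : ℕ) : digits β x k = ⌊β * (betaT β)^[k] x⌋ := by
  simp [digits, eps]

lemma betaT_mem_Ico (β x : ℝ) : betaT β x ∈ Ico (0 : ℝ) 1 :=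
  ⟨Int.fract_nonneg _, Int.fract_lt_one _⟩

lemma iterate_betaT_mem_Ico {k : ℕ} (hk : k ≠ 0) : (betaT β)^[k] x ∈ Ico (0 : ℝ) 1 := by
  obtain ⟨k, rfl⟩ := Nat.exists_eq_succ_of_ne_zero hk
  rw [Function.iterate_succ_apply']
  exact betaT_mem_Ico _ _

lemma iterate_betaT_mem_Ico_of_mem (hx : x ∈ Ico (0 : ℝ) 1) (k : ℕ) :
    (betaT β)^[k] x ∈ Ico (0 : ℝ) 1 := by
  rcases eq_or_ne k 0 with rfl | hk
  exacts [hx, iterate_betaT_mem_Ico hk]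

lemma iterate_betaT_nonneg (hx : 0 ≤ x) (k : ℕ) : 0 ≤ (betaT β)^[k] x := by
  rcases eq_or_ne k 0 with rfl | hk
  exacts [hx, (iterate_betaT_mem_Ico hk).1]

lemma iterate_betaT_le_one (hx : x ≤ 1) (k : ℕ) : (betaT β)^[k] x ≤ 1 := by
  rcases eq_or_ne k 0 with rfl | hk
  exacts [hx, (iterate_betaT_mem_Ico hk).2.le]

lemma iterate_betaT_zero (β : ℝ) (k : ℕ) : (betaT β)^[k] 0 = 0 :=
  Function.iterate_fixed (by simp [betaT]) k

lemma iterate_betaT_succ (β x : ℝ) (k : ℕ) :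
    (betaT β)^[k + 1] x = β * (betaT β)^[k] x - digits β x k := by
  rw [Function.iterate_succ_apply', digits_eq_floor]
  rfl

lemma digits_iterate (β x : ℝ) (k : ℕ) :
    digits β ((betaT β)^[k] x) = fun i => digits β x (k + i) := by
  ext i
  simp only [digits_eq_floor, ← Function.iterate_add_apply, add_comm i k]

lemma digits_nonneg (hβ : 0 ≤ β) (hx : 0 ≤ x) (k : ℕ) : 0 ≤ digits β x k := by
  rw [digits_eq_floor]
  exact Int.floor_nonneg.2 (mul_nonneg hβ (iterate_betaT_nonneg hx k))

lemma iterate_betaT_add_of_digits_eq_zero {m i : ℕ} (h : ∀ l < i, digits β x (m + l) = 0) :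
    (betaT β)^[m + i] x = β ^ i * (betaT β)^[m] x := by
  induction i with
  | zero => simp
  | succ i ih =>
    rw [← add_assoc, iterate_betaT_succ, ih (fun l hl => h l (by omega)), h i (by omega)]
    push_cast
    ring

lemma exists_digits_ne_zero (hβ : 1 < β) (hx : x ≤ 1) {m : ℕ} (hpos : 0 < (betaT β)^[m] x) :
    ∃ i, digits β x (m + i) ≠ 0 := by
  by_contra! h
  obtain ⟨i, hi⟩ := pow_unbounded_of_one_lt ((betaT β)^[m] x)⁻¹ hβ
  rw [inv_lt_iff_one_lt_mul₀ hpos] at hi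
  have hle := iterate_betaT_le_one (β := β) hx (m + i)
  rw [iterate_betaT_add_of_digits_eq_zero fun l _ => h l] at hle
  linarith

end BetaTransformation

section DigitSum

variable {β : ℝ}

lemma digitSum_zero (β : ℝ) (d : ℕ → ℤ) : digitSum β d 0 = 0 := by
  simp [digitSum]

lemma digitSum_succ (β : ℝ) (d : ℕ → ℤ) (m : ℕ) :
    digitSum β d (m + 1) = digitSum β d m + d m * β⁻¹ ^ (m + 1) :=
  Finset.sum_range_succ _ _

lemma digitSum_congr {d e : ℕ → ℤ} {m : ℕ} (h : ∀ i < m, d i = e i) :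
    digitSum β d m = digitSum β e m :=
  Finset.sum_congr rfl fun i hi => by rw [h i (Finset.mem_range.1 hi)]

lemma digitSum_add (β : ℝ) (d : ℕ → ℤ) (j m : ℕ) :
    digitSum β d (j + m) = digitSum β d j + β⁻¹ ^ j * digitSum β (fun i => d (j + i)) m := by
  simp only [digitSum, Finset.sum_range_add, Finset.mul_sum]
  congr 1
  refine Finset.sum_congr rfl fun i _ => ?_
  ring

lemma digitSum_nonneg (hβ : 0 ≤ β) {d : ℕ → ℤ} {m : ℕ} (h : ∀ i < m, 0 ≤ d i) :
    0 ≤ digitSum β d m :=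
  Finset.sum_nonneg fun i hi => by
    have := h i (Finset.mem_range.1 hi)
    positivity

lemma eq_digitSum_add_iterate (hβ : β ≠ 0) (x : ℝ) (k : ℕ) :
    x = digitSum β (digits β x) k + β⁻¹ ^ k * (betaT β)^[k] x := by
  induction k with
  | zero => simp [digitSum_zero]
  | succ k ih =>
    rw [digitSum_succ, iterate_betaT_succ, pow_succ]
    linear_combination ih - β⁻¹ ^ k * (betaT β)^[k] x * inv_mul_cancel₀ hβ

lemma digitSum_le_self (hβ : 0 < β) {x : ℝ} (hx : 0 ≤ x) (k : ℕ) :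
    digitSum β (digits β x) k ≤ x := by
  have := eq_digitSum_add_iterate hβ.ne' x k
  have := mul_nonneg (pow_nonneg (inv_nonneg.2 hβ.le) k) (iterate_betaT_nonneg (β := β) hx k)
  linarith

end DigitSum

section Cylinder

variable {β x : ℝ}

lemma digits_eq_iff (hβ : 0 < β) {d : ℕ → ℤ} {N : ℕ} :
    (∀ k < N, digits β x k = d k) ↔
      ∀ k < N, digitSum β d (k + 1) ≤ x ∧ x < digitSum β d (k + 1) + β⁻¹ ^ (k + 1) := by
  induction N with
  | zero => simp
  | succ N ih =>
    simp only [Nat.forall_lt_succ_right]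
    rw [ih]
    refine and_congr_right fun h => ?_
    have hx := eq_digitSum_add_iterate hβ.ne' x N
    rw [digitSum_congr (ih.2 h)] at hx
    have hscale : x - (digitSum β d N + d N * β⁻¹ ^ (N + 1)) =
        β⁻¹ ^ (N + 1) * (β * (betaT β)^[N] x - d N) := by
      rw [pow_succ]
      linear_combination hx - β⁻¹ ^ N * (betaT β)^[N] x * inv_mul_cancel₀ hβ.ne'
    have hpos : 0 < β⁻¹ ^ (N + 1) := by positivity
    rw [digits_eq_floor, Int.floor_eq_iff, digitSum_succ]
    constructor
    · rintro ⟨h1, h2⟩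
      constructor <;> nlinarith
    · rintro ⟨h1, h2⟩
      constructor <;> nlinarith

lemma mem_cylinder_iff (hβ : 0 < β) {N : ℕ} {d : ℕ → ℤ} :
    x ∈ cylinder β N d ↔ ∀ j ≤ N, digitSum β d j ≤ x ∧ x < digitSum β d j + β⁻¹ ^ j := by
  change x ∈ Ico 0 1 ∧ (∀ k < N, digits β x k = d k) ↔ _
  rw [digits_eq_iff hβ]
  constructor
  · rintro ⟨h0, h⟩ (_ | j) hj
    · simpa [digitSum_zero] using h0
    · exact h j hj
  · intro h
    exact ⟨by simpa [digitSum_zero] using h 0 (Nat.zero_le _), fun k hk => h (k + 1) hk⟩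

end Cylinder

section Lexicographic

variable {β x : ℝ}

lemma digitSum_add_inv_pow_le_of_digits_lt (hβ : 0 < β) {y : ℝ} (hy : 0 ≤ y) {j : ℕ}
    (hagree : ∀ i < j, digits β x i = digits β y i) (hlt : digits β x j < digits β y j) :
    digitSum β (digits β x) (j + 1) + β⁻¹ ^ (j + 1) ≤ y := by
  have hy' := digitSum_le_self hβ hy (j + 1)
  rw [digitSum_succ] at hy' ⊢
  rw [digitSum_congr hagree]
  have hlt' : (digits β x j : ℝ) + 1 ≤ digits β y j := by exact_mod_cast hlt
  nlinarith [pow_pos (inv_pos.2 hβ) (j + 1)]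

lemma one_lt_digitSum_one_add_inv_pow (hβ : 1 < β) (j : ℕ) :
    1 < digitSum β (digits β 1) (j + 1) + β⁻¹ ^ (j + 1) := by
  have h1 := eq_digitSum_add_iterate (by positivity) 1 (j + 1)
  have hT := (iterate_betaT_mem_Ico (β := β) (x := 1) (Nat.succ_ne_zero j)).2
  nlinarith [pow_pos (inv_pos.2 (zero_lt_one.trans hβ)) (j + 1)]

lemma digits_lt_digits_one (hβ : 1 < β) (hx : x ∈ Ico (0 : ℝ) 1) {j : ℕ}
    (hagree : ∀ i < j, digits β x i = digits β 1 i) (hne : digits β x j ≠ digits β 1 j) :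
    digits β x j < digits β 1 j := by
  refine hne.lt_or_gt.resolve_right fun hgt => ?_
  have := digitSum_add_inv_pow_le_of_digits_lt (zero_lt_one.trans hβ) hx.1
    (fun i hi => (hagree i hi).symm) hgt
  linarith [one_lt_digitSum_one_add_inv_pow hβ j, hx.2]

lemma digitSum_digits_add_inv_pow_le_one_of_agree (hβ : 0 < β) {G m : ℕ}
    (hG : 0 < (betaT β)^[m] 1 → β⁻¹ ^ G ≤ (betaT β)^[m] 1) (hx : x ∈ Ico (0 : ℝ) 1)
    (hall : ∀ i < m, digits β x i = digits β 1 i) :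
    digitSum β (digits β x) m + β⁻¹ ^ (m + G) ≤ 1 := by
  have hone := eq_digitSum_add_iterate hβ.ne' 1 m
  have hle := digitSum_le_self hβ hx.1 m
  rw [digitSum_congr hall] at hle ⊢
  have hc : 0 < β⁻¹ ^ m := by positivity
  have hpos : 0 < (betaT β)^[m] 1 := by
    by_contra! h
    nlinarith [iterate_betaT_nonneg (β := β) zero_le_one m, hx.2]
  rw [pow_add]
  nlinarith [hG hpos]

lemma digitSum_digits_add_inv_pow_le_one (hβ : 1 < β) {n G : ℕ}
    (hG : ∀ m ≤ n, 0 < (betaT β)^[m] 1 → β⁻¹ ^ G ≤ (betaT β)^[m] 1)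
    (hx : x ∈ Ico (0 : ℝ) 1) {m : ℕ} (hm : m ≤ n) :
    digitSum β (digits β x) m + β⁻¹ ^ (m + G) ≤ 1 := by
  have hβ0 : 0 < β := zero_lt_one.trans hβ
  induction m using Nat.strong_induction_on generalizing x with
  | _ m ih =>
  by_cases hall : ∀ i < m, digits β x i = digits β 1 i
  · exact digitSum_digits_add_inv_pow_le_one_of_agree hβ0 (hG m hm) hx hall
  · push Not at hall
    obtain ⟨j, ⟨hjm, hne⟩, hmin⟩ : ∃ j, (j < m ∧ digits β x j ≠ digits β 1 j) ∧
        ∀ i < j, ¬(i < m ∧ digits β x i ≠ digits β 1 i) :=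
      ⟨Nat.find hall, Nat.find_spec hall, fun i => Nat.find_min hall⟩
    have hagree : ∀ i < j, digits β x i = digits β 1 i := fun i hi => by
      simpa [hi.trans hjm] using hmin i hi
    have hhead := digitSum_add_inv_pow_le_of_digits_lt hβ0 zero_le_one hagree
      (digits_lt_digits_one hβ hx hagree hne)
    have htail := ih (m - (j + 1)) (by omega) (iterate_betaT_mem_Ico_of_mem (β := β) hx (j + 1))
      (by omega)
    rw [digits_iterate] at htail
    have hsplit := digitSum_add β (digits β x) (j + 1) (m - (j + 1))
    rw [Nat.add_sub_cancel' hjm] at hsplit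
    have hpow : β⁻¹ ^ (m + G) = β⁻¹ ^ (j + 1) * β⁻¹ ^ (m - (j + 1) + G) := by
      rw [← pow_add]
      congr 1
      omega
    rw [hsplit, hpow]
    nlinarith [pow_pos (inv_pos.2 hβ0) (j + 1)]

end Lexicographic

section PaddedCylinder

variable {β : ℝ}

lemma digitSum_pad_bounds (hβ : 1 < β) {n G : ℕ}
    (hG : ∀ m ≤ n, 0 < (betaT β)^[m] 1 → β⁻¹ ^ G ≤ (betaT β)^[m] 1)
    {x₀ : ℝ} (hx₀ : x₀ ∈ Ico (0 : ℝ) 1) {d : ℕ → ℤ} (hd_lt : ∀ k < n, d k = digits β x₀ k)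
    (hd_ge : ∀ k, n ≤ k → d k = 0) {j : ℕ} (hj : j ≤ n + G) :
    digitSum β d j ≤ digitSum β d n ∧
      digitSum β d n + β⁻¹ ^ (n + G) ≤ digitSum β d j + β⁻¹ ^ j := by
  have hβ0 : 0 < β := zero_lt_one.trans hβ
  rcases le_total j n with hjn | hnj
  · obtain ⟨l, rfl⟩ := Nat.exists_eq_add_of_le hjn
    have htail : digitSum β (fun i => d (j + i)) l =
        digitSum β (digits β ((betaT β)^[j] x₀)) l := by
      rw [digits_iterate]
      exact digitSum_congr fun i hi => hd_lt _ (by omega)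
    have hV0 : 0 ≤ digitSum β (digits β ((betaT β)^[j] x₀)) l :=
      digitSum_nonneg hβ0.le fun i _ => digits_nonneg hβ0.le (iterate_betaT_nonneg hx₀.1 j) i
    have hV1 := digitSum_digits_add_inv_pow_le_one hβ hG
      (iterate_betaT_mem_Ico_of_mem (β := β) hx₀ j) (m := l) (by omega)
    have hpow : β⁻¹ ^ (j + l + G) = β⁻¹ ^ j * β⁻¹ ^ (l + G) := by
      rw [← pow_add, add_assoc]
    rw [digitSum_add, htail, hpow]
    constructor <;> nlinarith [pow_pos (inv_pos.2 hβ0) j]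
  · obtain ⟨l, rfl⟩ := Nat.exists_eq_add_of_le hnj
    have htail : digitSum β (fun i => d (n + i)) l = 0 := by
      rw [digitSum_congr (e := fun _ => 0) fun i _ => hd_ge _ (by omega)]
      simp [digitSum]
    rw [digitSum_add, htail, mul_zero, add_zero]
    exact ⟨le_rfl, add_le_add_right
      (pow_le_pow_of_le_one (inv_nonneg.2 hβ0.le) (inv_le_one_of_one_le₀ hβ.le) (by omega)) _⟩

lemma cylinder_pad_eq (hβ : 1 < β) {n G : ℕ}
    (hG : ∀ m ≤ n, 0 < (betaT β)^[m] 1 → β⁻¹ ^ G ≤ (betaT β)^[m] 1)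
    {ω : ℕ → ℤ} (hω : isAdmissible β n ω) :
    cylinder β (n + G) (fun k => if k < n then ω k else 0) =
      Ico (digitSum β ω n) (digitSum β ω n + β⁻¹ ^ (n + G)) := by
  obtain ⟨x₀, hx₀, hωx₀⟩ := hω
  set d : ℕ → ℤ := fun k => if k < n then ω k else 0
  have hbounds := fun j (hj : j ≤ n + G) => digitSum_pad_bounds hβ hG hx₀ (d := d)
    (fun k hk => by simp only [d, if_pos hk]; exact (hωx₀ k hk).symm)
    (fun k hk => by simp only [d, if_neg (not_lt.2 hk)]) hj
  have hdn : digitSum β d n = digitSum β ω n :=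
    digitSum_congr fun k hk => by simp only [d, if_pos hk]
  have hdN : digitSum β d (n + G) = digitSum β d n :=
    le_antisymm (hbounds _ le_rfl).1 (by linarith [(hbounds _ le_rfl).2])
  ext x
  rw [mem_cylinder_iff (zero_lt_one.trans hβ), mem_Ico, ← hdn]
  constructor
  · intro h
    simpa [hdN] using h (n + G) le_rfl
  · rintro ⟨hlo, hhi⟩ j hj
    obtain ⟨hj₁, hj₂⟩ := hbounds j hj
    constructor <;> linarith

end PaddedCylinder

section EpsStar

variable {β : ℝ}

lemma one_le_eps_one_one (hβ : 1 < β) : 1 ≤ eps β 1 1 := by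
  have : eps β 1 1 = ⌊β⌋ := by simp [eps]
  rw [this]
  exact Int.le_floor.2 (by exact_mod_cast hβ.le)

lemma iterate_betaT_one_eq_zero_of_tail (hβ : 1 < β) {p : ℕ}
    (htail : ∀ k, p < k → eps β 1 k = 0) : (betaT β)^[p] 1 = 0 := by
  by_contra hne
  obtain ⟨i, hi⟩ := exists_digits_ne_zero hβ le_rfl
    ((iterate_betaT_nonneg (β := β) zero_le_one p).lt_of_ne' hne)
  exact hi (htail _ (by omega))

open Classical in
lemma epsStar_eq_eps_one (hβ : 1 < β) {q : ℕ} (hq : 1 ≤ q) (hpos : 0 < (betaT β)^[q] 1) :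
    epsStar β q = eps β 1 q := by
  rw [epsStar]
  split_ifs with hfin
  · obtain ⟨-, -, htail⟩ := Nat.find_spec hfin
    have hqp : q < Nat.find hfin := by
      by_contra! hpq
      rw [← Nat.sub_add_cancel hpq, Function.iterate_add_apply,
        iterate_betaT_one_eq_zero_of_tail hβ htail, iterate_betaT_zero] at hpos
      exact hpos.false
    simp only
    rw [Nat.mod_eq_of_lt (by omega : q - 1 < Nat.find hfin), if_neg (by omega),
      Nat.sub_add_cancel hq]
  · rfl

lemma exists_eps_one_ne_zero_of_infinite (hβ : 1 < β)
    (hinf : ¬∃ p, 1 ≤ p ∧ eps β 1 p ≠ 0 ∧ ∀ k, p < k → eps β 1 k = 0) {m : ℕ} (hm : 1 ≤ m) :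
    ∃ i, eps β 1 (m + i + 1) ≠ 0 := by
  by_contra! hall
  have h1 : eps β 1 1 ≠ 0 := (zero_lt_one.trans_le (one_le_eps_one_one hβ)).ne'
  refine hinf ⟨Nat.findGreatest (fun k => eps β 1 k ≠ 0) m, Nat.le_findGreatest hm h1,
    Nat.findGreatest_spec (P := fun k => eps β 1 k ≠ 0) hm h1, fun k hk => ?_⟩
  by_cases hkm : k ≤ m
  · by_contra hne
    exact Nat.findGreatest_is_greatest hk hkm hne
  · obtain ⟨i, rfl⟩ : ∃ i, k = m + i + 1 := ⟨k - m - 1, by omega⟩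
    exact hall i

open Classical in
lemma exists_epsStar_ne_zero (hβ : 1 < β) {m : ℕ} (hm : 1 ≤ m) :
    ∃ i, epsStar β (m + i + 1) ≠ 0 := by
  rw [epsStar]
  split_ifs with hfin
  · obtain ⟨hp, -, htail⟩ := Nat.find_spec hfin
    -- Position `m p + 1` of the periodic word carries `ε_1(1) = ⌊β⌋`, lowered by one if `p = 1`,
    -- in which case `β = ⌊β⌋ ≥ 2`.
    refine ⟨m * Nat.find hfin - m, ?_⟩
    have hidx : m + (m * Nat.find hfin - m) + 1 - 1 = m * Nat.find hfin := by
      have := Nat.le_mul_of_pos_right m hp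
      omega
    simp only
    rw [hidx, Nat.mul_mod_left, zero_add]
    have h1 := one_le_eps_one_one hβ
    split_ifs with hp1
    · have hT := iterate_betaT_one_eq_zero_of_tail hβ htail
      rw [← hp1, iterate_betaT_succ, Function.iterate_zero_apply, mul_one, sub_eq_zero] at hT
      have h2 : 1 < digits β 1 0 := by exact_mod_cast hβ.trans_eq hT
      rw [← hp1]
      exact (sub_pos.2 h2).ne'
    · omega
  · exact exists_eps_one_ne_zero_of_infinite hβ hfin hm

lemma bddAbove_zeroRun (hβ : 1 < β) {m : ℕ} (hm : 1 ≤ m) :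
    BddAbove {k : ℕ | ∀ i < k, epsStar β (m + i + 1) = 0} := by
  obtain ⟨i, hi⟩ := exists_epsStar_ne_zero hβ hm
  exact ⟨i, fun k hk => not_lt.1 fun hik => hi (hk i hik)⟩

lemma exists_zeroRun_inv_pow_le (hβ : 1 < β) {m : ℕ} (hm : 1 ≤ m)
    (hpos : 0 < (betaT β)^[m] 1) :
    ∃ i, (∀ l < i, epsStar β (m + l + 1) = 0) ∧ β⁻¹ ^ (i + 1) ≤ (betaT β)^[m] 1 := by
  have hβ0 : 0 < β := zero_lt_one.trans hβ
  have hex := exists_digits_ne_zero hβ le_rfl hpos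
  have hzero : ∀ l < Nat.find hex, digits β 1 (m + l) = 0 :=
    fun l hl => not_not.1 (Nat.find_min hex hl)
  refine ⟨Nat.find hex, fun l hl => ?_, ?_⟩
  · rw [epsStar_eq_eps_one hβ (by omega)]
    · exact hzero l hl
    · rw [add_assoc, iterate_betaT_add_of_digits_eq_zero fun l' hl' => hzero l' (by omega)]
      positivity
  · have hdigit : (1 : ℝ) ≤ digits β 1 (m + Nat.find hex) := by
      have := digits_nonneg hβ0.le zero_le_one (m + Nat.find hex)
      have := Nat.find_spec hex
      exact_mod_cast (show (1 : ℤ) ≤ _ by omega)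
    rw [digits_eq_floor, iterate_betaT_add_of_digits_eq_zero hzero] at hdigit
    calc β⁻¹ ^ (Nat.find hex + 1)
        ≤ β⁻¹ ^ (Nat.find hex + 1) * (β * (β ^ Nat.find hex * (betaT β)^[m] 1)) :=
          le_mul_of_one_le_right (by positivity) (hdigit.trans (Int.floor_le _))
      _ = (betaT β)^[m] 1 := by
          rw [← mul_assoc β, ← pow_succ', ← mul_assoc, ← mul_pow, inv_mul_cancel₀ hβ0.ne',
            one_pow, one_mul]

lemma inv_pow_sup_zeroRun_le (hβ : 1 < β) {n m : ℕ} (hmn : m ≤ n)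
    (hpos : 0 < (betaT β)^[m] 1) :
    β⁻¹ ^ ((Finset.Icc 1 n).sup (fun m => sSup {k : ℕ | ∀ i < k, epsStar β (m + i + 1) = 0})
      + 1) ≤ (betaT β)^[m] 1 := by
  have hinv₀ : 0 ≤ β⁻¹ := inv_nonneg.2 (zero_lt_one.trans hβ).le
  have hinv₁ : β⁻¹ ≤ 1 := inv_le_one_of_one_le₀ hβ.le
  rcases eq_or_ne m 0 with rfl | hm
  · simpa using pow_le_one₀ hinv₀ hinv₁
  replace hm : 1 ≤ m := Nat.one_le_iff_ne_zero.2 hm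
  obtain ⟨i, hi, hle⟩ := exists_zeroRun_inv_pow_le hβ hm hpos
  have hiΓ := (le_csSup (bddAbove_zeroRun hβ hm) hi).trans
    (Finset.le_sup (f := fun m => sSup {k : ℕ | ∀ i < k, epsStar β (m + i + 1) = 0})
      (Finset.mem_Icc.2 ⟨hm, hmn⟩))
  exact (pow_le_pow_of_le_one hinv₀ hinv₁ (by omega)).trans hle

end EpsStar

theorem stmt16_general (β : ℝ) (hβ : 1 < β) (n : ℕ) :
    (∀ m : ℕ, 1 ≤ m → m ≤ n →
      BddAbove {k : ℕ | ∀ i < k, epsStar β (m + i + 1) = 0}) ∧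
    ∀ ω : ℕ → ℤ, isAdmissible β n ω →
      isFull β
        (n + ((Finset.Icc 1 n).sup fun m =>
          sSup {k : ℕ | ∀ i < k, epsStar β (m + i + 1) = 0}) + 1)
        (fun k => if k < n then ω k else 0) := by
  refine ⟨fun m hm _ => bddAbove_zeroRun hβ hm, fun ω hω => ?_⟩
  rw [isFull, add_assoc,
    cylinder_pad_eq hβ (fun m hmn hpos => inv_pow_sup_zeroRun_le hβ hmn hpos) hω,
    Real.volume_Ico, add_sub_cancel_left, zpow_neg, zpow_natCast, inv_pow]

theorem stmt16 (β : ℝ) (hβ : 1 < β) (n : ℕ) (hn : 1 ≤ n) :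
    (∀ m : ℕ, 1 ≤ m → m ≤ n →
      BddAbove {k : ℕ | ∀ i < k, epsStar β (m + i + 1) = 0}) ∧
    ∀ ω : ℕ → ℤ, isAdmissible β n ω →
      isFull β
        (n + ((Finset.Icc 1 n).sup fun m =>
          sSup {k : ℕ | ∀ i < k, epsStar β (m + i + 1) = 0}) + 1)
        (fun k => if k < n then ω k else 0) :=
  stmt16_general β hβ n
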